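/- arXiv:1402.3127 — 8 statements merged into one kernel-verified Lean document; each statement's English description precedes it below -/
import Mathlib

section
/- For integers α ≥ 1 and d ≥ 2, the identity C(αd-1, d-1) = 1 + Σ_{μ=1}^{α-1} Σ_{τ=1}^{d-1} C((α-μ)d - 1, d-τ-1) · C(d, τ) holds. -/
/-!
Vandermonde's identity, with the `τ = 0` term split off, gives
`C((k+1)d-1, d-1) = C(kd-1, d-1) + Σ_{τ=1}^{d-1} C(kd-1, d-τ-1) C(d, τ)` for `k ≥ 1`.
After the substitution `k = α - μ` the double sum therefore telescopes from
`C(d-1, d-1) = 1` up to `C(αd-1, d-1)`.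
-/

open Finset

theorem Nat.add_choose_sub_one (m d : ℕ) :
    (m + d).choose (d - 1) =
      m.choose (d - 1) + ∑ τ ∈ Icc 1 (d - 1), m.choose (d - τ - 1) * d.choose τ := by
  rcases d with _ | d
  · simp
  rw [Nat.add_choose_eq, ← Nat.sum_antidiagonal_swap]
  simp only [Prod.fst_swap, Prod.snd_swap, Nat.add_sub_cancel]
  rw [Finset.Nat.sum_antidiagonal_eq_sum_range_succ (fun j i => m.choose i * (d + 1).choose j),
    sum_range_succ', ← Nat.Ico_zero_eq_range,
    sum_Ico_add' (fun τ => m.choose (d - τ) * (d + 1).choose τ), Ico_add_one_right_eq_Icc]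
  simp [add_comm, Nat.sub_sub]

theorem Finset.sum_Ico_eq_of_succ_eq_add {M : Type*} [AddCommMonoid M] {f g : ℕ → M} {m n : ℕ}
    (h : ∀ k, m ≤ k → f (k + 1) = f k + g k) (hmn : m ≤ n) :
    f n = f m + ∑ k ∈ Ico m n, g k := by
  induction n, hmn using Nat.le_induction with
  | base => simp
  | succ n hmn ih => rw [sum_Ico_succ_top hmn, h n hmn, ih, add_assoc]

theorem choose_identity_general (α d : ℕ) (hα : 1 ≤ α) :
    Nat.choose (α * d - 1) (d - 1) =
      1 + ∑ μ ∈ Finset.Icc 1 (α - 1), ∑ τ ∈ Finset.Icc 1 (d - 1),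
        Nat.choose ((α - μ) * d - 1) (d - τ - 1) * Nat.choose d τ := by
  set g : ℕ → ℕ := fun k => ∑ τ ∈ Icc 1 (d - 1), (k * d - 1).choose (d - τ - 1) * d.choose τ
  have step : ∀ k, 1 ≤ k → ((k + 1) * d - 1).choose (d - 1) = (k * d - 1).choose (d - 1) + g k := by
    intro k hk
    rw [← Nat.add_choose_sub_one]
    congr 1
    rcases d with _ | d
    · simp
    · have : k ≤ k * (d + 1) := Nat.le_mul_of_pos_right k d.succ_pos
      rw [add_mul]
      omega
  have reflect : ∑ μ ∈ Icc 1 (α - 1), g (α - μ) = ∑ k ∈ Ico 1 α, g k := by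
    rw [← Ico_add_one_right_eq_Icc, Nat.sub_add_cancel hα, sum_Ico_reflect g 1 (Nat.le_succ α)]
    simp
  rw [reflect, sum_Ico_eq_of_succ_eq_add (f := fun k => (k * d - 1).choose (d - 1)) step hα]
  simp

/-- For integers `α ≥ 1` and `d ≥ 2`,
`C(αd-1, d-1) = 1 + Σ_{μ=1}^{α-1} Σ_{τ=1}^{d-1} C((α-μ)d - 1, d-τ-1) · C(d, τ)`. -/
theorem choose_identity (α d : ℕ) (hα : 1 ≤ α) (hd : 2 ≤ d) :
    Nat.choose (α * d - 1) (d - 1) =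
      1 + ∑ μ ∈ Finset.Icc 1 (α - 1), ∑ τ ∈ Finset.Icc 1 (d - 1),
        Nat.choose ((α - μ) * d - 1) (d - τ - 1) * Nat.choose d τ :=
  choose_identity_general α d hα
end

section
/- The set S_{(d,(α-1)d)} is the disjoint union of the singleton {αe} and the sets T_{(α,d,μ,τ)} over μ ∈ {1,...,α-1} and τ ∈ {1,...,d-1}. -/
/-- `S_{(d,(α-1)d)}` is the disjoint union of `{αe}` and the sets `T_{(α,d,μ,τ)}`,
`μ ∈ {1,…,α-1}`, `τ ∈ {1,…,d-1}`.  Here `S_{(d,m)} = {v : v ≥ e, Σ v = d+m}` (so the sum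
condition is `Σ v = αd`) and `T_{(α,d,μ,τ)} = {v : v ≥ μe, Σ v = αd, exactly τ entries equal μ}`. -/
theorem simplex_partition (d α : ℕ) (hd : 2 ≤ d) (hα : 1 ≤ α) :
    ({v : Fin d → ℤ | (∀ k, 1 ≤ v k) ∧ ∑ k, v k = α * d} =
        {fun _ => (α : ℤ)} ∪
          ⋃ μ ∈ Finset.Icc 1 (α - 1), ⋃ τ ∈ Finset.Icc 1 (d - 1),
            {v : Fin d → ℤ | (∀ k, (μ : ℤ) ≤ v k) ∧ ∑ k, v k = α * d ∧
              (Finset.univ.filter (fun k => v k = (μ : ℤ))).card = τ})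
    ∧ (∀ μ ∈ Finset.Icc 1 (α - 1), ∀ τ ∈ Finset.Icc 1 (d - 1),
        (fun _ => (α : ℤ)) ∉
          {v : Fin d → ℤ | (∀ k, (μ : ℤ) ≤ v k) ∧ ∑ k, v k = α * d ∧
            (Finset.univ.filter (fun k => v k = (μ : ℤ))).card = τ})
    ∧ (∀ μ ∈ Finset.Icc 1 (α - 1), ∀ τ ∈ Finset.Icc 1 (d - 1),
        ∀ μ' ∈ Finset.Icc 1 (α - 1), ∀ τ' ∈ Finset.Icc 1 (d - 1),
          (μ, τ) ≠ (μ', τ') →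
          Disjoint
            {v : Fin d → ℤ | (∀ k, (μ : ℤ) ≤ v k) ∧ ∑ k, v k = α * d ∧
              (Finset.univ.filter (fun k => v k = (μ : ℤ))).card = τ}
            {v : Fin d → ℤ | (∀ k, (μ' : ℤ) ≤ v k) ∧ ∑ k, v k = α * d ∧
              (Finset.univ.filter (fun k => v k = (μ' : ℤ))).card = τ'}) := by
  refine ⟨?_, ?_, ?_⟩
  · ext v
    simp only [Set.mem_setOf_eq, Set.mem_union, Set.mem_singleton_iff, Set.mem_iUnion,
      Finset.mem_Icc]
    constructor
    · rintro ⟨h1, hs⟩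
      by_cases hv : v = fun _ => (α : ℤ)
      · exact Or.inl hv
      · right
        have hne : (Finset.univ : Finset (Fin d)).Nonempty :=
          ⟨⟨0, by omega⟩, Finset.mem_univ _⟩
        set m := Finset.univ.inf' hne v with hm
        have hmin : ∀ k, m ≤ v k := fun k => Finset.inf'_le _ (Finset.mem_univ k)
        obtain ⟨k0, -, hk0⟩ := Finset.exists_mem_eq_inf' hne v
        have hm1 : 1 ≤ m := by rw [hm, hk0]; exact h1 k0
        have hmlt : m < (α : ℤ) := by
          by_contra h
          push_neg at h
          apply hv
          funext k
          have hall : ∀ j ∈ Finset.univ, (α : ℤ) ≤ v j := fun j _ => le_trans h (hmin j)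
          have hsum : ∑ _j : Fin d, (α : ℤ) = ∑ j, v j := by
            rw [hs]; simp [mul_comm]
          have h2 := (Finset.sum_eq_sum_iff_of_le hall).mp hsum k (Finset.mem_univ k)
          omega
        set μ := m.toNat with hμ
        have hcast : (μ : ℤ) = m := Int.toNat_of_nonneg (by omega)
        have hμα : μ < α := by
          have := hmlt; rw [← hcast] at this; exact_mod_cast this
        set τ := (Finset.univ.filter (fun k => v k = (μ : ℤ))).card with hτ
        have hτ1 : 1 ≤ τ := by
          have hk0m : k0 ∈ Finset.univ.filter (fun k => v k = (μ : ℤ)) := by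
            simp [hcast, ← hk0, hm]
          exact Finset.card_pos.mpr ⟨k0, hk0m⟩
        have hτd : τ < d := by
          by_contra h
          push_neg at h
          have hcard : (Finset.univ.filter (fun k => v k = (μ : ℤ))).card = d :=
            le_antisymm (le_trans (Finset.card_filter_le _ _) (by simp)) h
          have hfil : Finset.univ.filter (fun k => v k = (μ : ℤ)) = Finset.univ :=
            Finset.eq_univ_of_card _ (by simpa using hcard)
          have hall : ∀ k, v k = (μ : ℤ) := by
            intro k
            have hk : k ∈ Finset.univ.filter (fun k => v k = (μ : ℤ)) := by
              rw [hfil]; exact Finset.mem_univ k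
            exact (Finset.mem_filter.mp hk).2
          have heq : (μ : ℤ) * d = (α : ℤ) * d := by
            rw [← hs]; simp [hall, mul_comm]
          have hd0 : (d : ℤ) ≠ 0 := by exact_mod_cast (by omega : d ≠ 0)
          have : (μ : ℤ) = (α : ℤ) := mul_right_cancel₀ hd0 heq
          have : μ = α := by exact_mod_cast this
          omega
        refine ⟨μ, ⟨by omega, by omega⟩, τ, ⟨hτ1, by omega⟩, ?_, hs, rfl⟩
        intro k; rw [hcast]; exact hmin k
    · rintro (rfl | ⟨μ, ⟨hμ1, -⟩, τ, -, hv1, hvs, -⟩)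
      · refine ⟨fun k => by show (1:ℤ) ≤ (α:ℤ); exact_mod_cast hα, by simp [mul_comm]⟩
      · exact ⟨fun k => le_trans (by exact_mod_cast hμ1) (hv1 k), hvs⟩
  · rintro μ hμ τ hτ ⟨-, -, hc⟩
    simp only [Finset.mem_Icc] at hμ hτ
    have hμα : μ < α := by omega
    have : Finset.univ.filter (fun _ : Fin d => (α : ℤ) = (μ : ℤ)) = ∅ := by
      apply Finset.filter_false_of_mem
      intro k _ h
      have : α = μ := by exact_mod_cast h
      omega
    rw [this] at hc
    simp at hc
    omega
  · intro μ hμ τ hτ μ' hμ' τ' hτ' hne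
    simp only [Finset.mem_Icc] at hμ hτ hμ' hτ'
    rw [Set.disjoint_left]
    rintro v ⟨h1, hs, hc⟩ ⟨h1', hs', hc'⟩
    have hex : ∃ k, v k = (μ : ℤ) := by
      have : (Finset.univ.filter (fun k => v k = (μ : ℤ))).Nonempty :=
        Finset.card_pos.mp (by omega)
      obtain ⟨k, hk⟩ := this
      exact ⟨k, (Finset.mem_filter.mp hk).2⟩
    have hex' : ∃ k, v k = (μ' : ℤ) := by
      have : (Finset.univ.filter (fun k => v k = (μ' : ℤ))).Nonempty :=
        Finset.card_pos.mp (by omega)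
      obtain ⟨k, hk⟩ := this
      exact ⟨k, (Finset.mem_filter.mp hk).2⟩
    obtain ⟨k, hk⟩ := hex
    obtain ⟨k', hk'⟩ := hex'
    have h1le : (μ' : ℤ) ≤ (μ : ℤ) := hk ▸ h1' k
    have h2le : (μ : ℤ) ≤ (μ' : ℤ) := hk' ▸ h1 k'
    have hμμ : μ = μ' := by exact_mod_cast le_antisymm h2le h1le
    subst hμμ
    have : τ = τ' := by rw [← hc, ← hc']
    exact hne (by simp [this])
end

section
/- If π_{(d,m)} is uniform on S_{(d,m)} with value η_{(d,m)}, then the distribution after one more step of the Polya urn dynamics is uniform on S_{(d,m+1)} with value η_{(d,m)} · (m+1)/(m+d). -/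
/-- If `π_{(d,m)}` is uniform on `S_{(d,m)}` with value `η` (and zero elsewhere), then after one
more step of the Polya urn dynamics (from `w`, move to `w + e_k` with probability
`w_k / (m + d)`), the distribution is uniform on `S_{(d,m+1)}` with value `η · (m+1)/(m+d)`. -/
theorem urn_step_uniform (d m : ℕ) (hd : 1 ≤ d) (η : ℝ) (p : (Fin d → ℤ) → ℝ)
    (hp_on : ∀ v : Fin d → ℤ, (∀ k, 1 ≤ v k) → ∑ k, v k = d + m → p v = η)
    (hp_off : ∀ v : Fin d → ℤ, ¬((∀ k, 1 ≤ v k) ∧ ∑ k, v k = d + m) → p v = 0)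
    (v : Fin d → ℤ) (hv : ∀ k, 1 ≤ v k) (hsum : ∑ k, v k = d + (m + 1)) :
    ∑ k : Fin d, p (v - Pi.single k 1) * (((v k - 1 : ℤ) : ℝ) / (m + d)) =
      η * (m + 1) / (m + d) := by
  have key : ∀ k ∈ Finset.univ, p (v - Pi.single k 1) * (((v k - 1 : ℤ) : ℝ) / (m + d))
      = η * (((v k - 1 : ℤ) : ℝ) / (m + d)) := by
    intro k _
    rcases eq_or_lt_of_le (hv k) with h | h
    · rw [← h]; simp
    · rw [hp_on]
      · intro j
        simp only [Pi.sub_apply, Pi.single_apply]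
        split_ifs with hj
        · subst hj; omega
        · simpa using hv j
      · simp only [Pi.sub_apply]
        rw [Finset.sum_sub_distrib]
        simp only [Pi.single_apply, Finset.sum_ite_eq', Finset.mem_univ, if_true]
        omega
  rw [Finset.sum_congr rfl key, ← Finset.mul_sum, ← Finset.sum_div]
  have : ∑ k : Fin d, ((v k - 1 : ℤ) : ℝ) = (m + 1 : ℝ) := by
    push_cast
    rw [Finset.sum_sub_distrib]
    have : ((∑ k, v k : ℤ) : ℝ) = ((d : ℝ) + (m + 1)) := by
      rw [hsum]; push_cast; ring
    push_cast at this
    simp [this]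
  rw [this, mul_div_assoc]
end

section
/- The sequence M^{(m)}_d defined by M^{(0)}_d = 1, M^{(m)}_1 = 1, and the recurrence M^{(m)}_d = Σ_{k=0}^m (d-1)/d^k · (m!/(m-k)!) · ((m+d-k-2)!/(m+d-1)!) · M^{(m-k)}_{d-1} satisfies the two-term recurrence M^{(m)}_d = ((d-1)/(m+d-1)) M^{(m)}_{d-1} + (m/(d(m+d-1))) M^{(m-1)}_d for all m ≥ 1, d ≥ 2. -/
/-!
Write the multi-term recurrence as `M m d = ∑ₖ c m d k * M (m - k) (d - 1)` with
`c = multiTermCoeff`. Its `k = 0` term is `(d - 1) / (m + d - 1) * M m (d - 1)`, and the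
remaining coefficients are those of the expansion of `M (m - 1) d`, rescaled by
`m / (d (m + d - 1))`: `c m d (k + 1)` is that multiple of `c (m - 1) d k`. Since `c 0 d 0 = 1`,
the expansion also holds at `m = 0`.
-/

def multiTermCoeff (m d k : ℕ) : ℚ :=
  ((d - 1 : ℚ) / (d : ℚ) ^ k) * ((m.factorial : ℚ) / ((m - k).factorial : ℚ)) *
    (((m + d - k - 2).factorial : ℚ) / ((m + d - 1).factorial : ℚ))

lemma cast_factorial_sub_one {n : ℕ} (hn : 2 ≤ n) :
    ((n - 1).factorial : ℚ) = ((n - 2).factorial : ℚ) * ((n : ℚ) - 1) := by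
  obtain ⟨n, rfl⟩ := Nat.exists_eq_add_of_le' hn
  rw [show n + 2 - 1 = n + 1 by omega, Nat.add_sub_cancel, Nat.factorial_succ]
  push_cast
  ring

lemma multiTermCoeff_zero {m d : ℕ} (h : 2 ≤ m + d) :
    multiTermCoeff m d 0 = (d - 1 : ℚ) / (m + d - 1 : ℚ) := by
  have hpos : ((m + d - 2).factorial : ℚ) ≠ 0 := by positivity
  have hne : (m + d - 1 : ℚ) ≠ 0 := by
    have : (2 : ℚ) ≤ m + d := by exact_mod_cast h
    linarith
  rw [multiTermCoeff, cast_factorial_sub_one h]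
  simp only [pow_zero, Nat.sub_zero, div_one, Nat.cast_add]
  field_simp

lemma multiTermCoeff_succ {m d : ℕ} (hm : 1 ≤ m) (hd : 1 ≤ d) (k : ℕ) :
    multiTermCoeff m d (k + 1) =
      (m : ℚ) / ((d : ℚ) * (m + d - 1 : ℚ)) * multiTermCoeff (m - 1) d k := by
  have hd0 : (d : ℚ) ≠ 0 := by positivity
  have hne : (m + d - 1 : ℚ) ≠ 0 := by
    have : (2 : ℚ) ≤ m + d := by exact_mod_cast (by omega : 2 ≤ m + d)
    linarith
  have hfact_m : (m.factorial : ℚ) = m * ((m - 1).factorial : ℚ) := by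
    exact_mod_cast (Nat.mul_factorial_pred (by omega : m ≠ 0)).symm
  have hfact_md :
      ((m + d - 1).factorial : ℚ) = ((m - 1 + d - 1).factorial : ℚ) * (m + d - 1 : ℚ) := by
    rw [cast_factorial_sub_one (by omega : 2 ≤ m + d), show m - 1 + d - 1 = m + d - 2 by omega,
      Nat.cast_add]
  have hpos₁ : ((m - 1 - k).factorial : ℚ) ≠ 0 := by positivity
  have hpos₂ : ((m - 1 + d - 1).factorial : ℚ) ≠ 0 := by positivity
  rw [multiTermCoeff, multiTermCoeff, hfact_m, hfact_md, show m - (k + 1) = m - 1 - k by omega,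
    show m + d - (k + 1) - 2 = m - 1 + d - k - 2 by omega, pow_succ]
  field_simp

lemma multi_term_expansion_of_zero (M : ℕ → ℕ → ℚ) (h0 : ∀ d, 1 ≤ d → M 0 d = 1)
    {d : ℕ} (hd : 2 ≤ d) :
    M 0 d = ∑ k ∈ Finset.range (0 + 1), multiTermCoeff 0 d k * M (0 - k) (d - 1) := by
  rw [Finset.sum_range_one, multiTermCoeff_zero (by omega), h0 d (by omega),
    h0 (d - 1) (by omega), Nat.cast_zero, zero_add, mul_one, div_self]
  have : (2 : ℚ) ≤ d := by exact_mod_cast hd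
  linarith

theorem two_term_of_multi_term_general (M : ℕ → ℕ → ℚ)
    (h0 : ∀ d, 1 ≤ d → M 0 d = 1)
    (hrec : ∀ m d, 1 ≤ m → 2 ≤ d →
      M m d = ∑ k ∈ Finset.range (m + 1),
        ((d - 1 : ℚ) / (d : ℚ) ^ k) * ((m.factorial : ℚ) / ((m - k).factorial : ℚ)) *
          (((m + d - k - 2).factorial : ℚ) / ((m + d - 1).factorial : ℚ)) * M (m - k) (d - 1))
    (m d : ℕ) (hm : 1 ≤ m) (hd : 2 ≤ d) :
    M m d = ((d - 1 : ℚ) / (m + d - 1 : ℚ)) * M m (d - 1) +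
      ((m : ℚ) / ((d : ℚ) * (m + d - 1 : ℚ))) * M (m - 1) d := by
  have expansion : ∀ n, M n d =
      ∑ k ∈ Finset.range (n + 1), multiTermCoeff n d k * M (n - k) (d - 1) := by
    intro n
    rcases Nat.eq_zero_or_pos n with rfl | hn
    · exact multi_term_expansion_of_zero M h0 hd
    · exact hrec n d hn hd
  obtain ⟨n, rfl⟩ : ∃ n, m = n + 1 := ⟨m - 1, by omega⟩
  rw [expansion (n + 1), Finset.sum_range_succ', multiTermCoeff_zero (by omega), Nat.sub_zero,
    add_tsub_cancel_right, expansion n, Finset.mul_sum, add_comm]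
  congr 1
  refine Finset.sum_congr rfl fun k _ => ?_
  rw [multiTermCoeff_succ (by omega) (by omega), add_tsub_cancel_right, mul_assoc,
    Nat.add_sub_add_right]

/-- The moments `M^{(m)}_d` defined by `M^{(0)}_d = 1`, `M^{(m)}_1 = 1` and the multi-term
recurrence (eq. (2) of the paper) satisfy the two-term recurrence (eq. (3)). -/
theorem two_term_of_multi_term (M : ℕ → ℕ → ℚ)
    (h0 : ∀ d, 1 ≤ d → M 0 d = 1)
    (h1 : ∀ m, M m 1 = 1)
    (hrec : ∀ m d, 1 ≤ m → 2 ≤ d →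
      M m d = ∑ k ∈ Finset.range (m + 1),
        ((d - 1 : ℚ) / (d : ℚ) ^ k) * ((m.factorial : ℚ) / ((m - k).factorial : ℚ)) *
          (((m + d - k - 2).factorial : ℚ) / ((m + d - 1).factorial : ℚ)) * M (m - k) (d - 1))
    (m d : ℕ) (hm : 1 ≤ m) (hd : 2 ≤ d) :
    M m d = ((d - 1 : ℚ) / (m + d - 1 : ℚ)) * M m (d - 1) +
      ((m : ℚ) / ((d : ℚ) * (m + d - 1 : ℚ))) * M (m - 1) d :=
  two_term_of_multi_term_general M h0 hrec m d hm hd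
end

section
/- The sequence M^{(m)}_d defined by M^{(0)}_d = 1, M^{(m)}_1 = 1, and the two-term recurrence M^{(m)}_d = ((d-1)/(m+d-1)) M^{(m)}_{d-1} + (m/(d(m+d-1))) M^{(m-1)}_d satisfies M^{(m)}_d = (m/(m+d-1)) Σ_{j=1}^d ((d-1)!/j!) · ((m+j-2)!/(m+d-2)!) · M^{(m-1)}_j for all m ≥ 1, d ≥ 2. -/
/-- The moments `M^{(m)}_d` defined by `M^{(0)}_d = 1`, `M^{(m)}_1 = 1` and the two-term
recurrence satisfy
`M^{(m)}_d = (m/(m+d-1)) Σ_{j=1}^d ((d-1)!/j!) ((m+j-2)!/(m+d-2)!) M^{(m-1)}_j`. -/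
theorem sum_form_of_two_term (M : ℕ → ℕ → ℚ)
    (h0 : ∀ d, 1 ≤ d → M 0 d = 1)
    (h1 : ∀ m, M m 1 = 1)
    (hrec : ∀ m d, 1 ≤ m → 2 ≤ d →
      M m d = ((d - 1 : ℚ) / (m + d - 1 : ℚ)) * M m (d - 1) +
        ((m : ℚ) / ((d : ℚ) * (m + d - 1 : ℚ))) * M (m - 1) d)
    (m d : ℕ) (hm : 1 ≤ m) (hd : 2 ≤ d) :
    M m d = ((m : ℚ) / (m + d - 1 : ℚ)) *
      ∑ j ∈ Finset.Icc 1 d,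
        (((d - 1).factorial : ℚ) / (j.factorial : ℚ)) *
          (((m + j - 2).factorial : ℚ) / ((m + d - 2).factorial : ℚ)) * M (m - 1) j := by
  obtain ⟨a, rfl⟩ : ∃ a, m = a + 1 := ⟨m - 1, by omega⟩
  clear hm
  have hfac : ∀ n : ℕ, (n.factorial : ℚ) ≠ 0 :=
    fun n => Nat.cast_ne_zero.mpr n.factorial_ne_zero
  induction d, hd using Nat.le_induction with
  | base =>
      rw [hrec (a+1) 2 (by omega) le_rfl]
      rw [show Finset.Icc 1 2 = {1,2} by decide, Finset.sum_insert (by decide),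
        Finset.sum_singleton]
      simp only [show (2:ℕ)-1 = 1 from rfl, show a+1-1 = a from rfl,
        show a+1+1-2 = a from by omega, show a+1+2-2 = a+1 from by omega, h1,
        Nat.factorial_one, Nat.factorial_succ (a+1-1), Nat.factorial]
      have ha : (0:ℚ) ≤ (a:ℚ) := Nat.cast_nonneg a
      have h2 : ((a:ℚ)+1+2-1) ≠ 0 := by linarith
      have h3 : (a+1 : ℚ) ≠ 0 := by linarith
      have := hfac a
      push_cast
      field_simp
      ring
  | succ d hd ih =>
      obtain ⟨e, rfl⟩ : ∃ e, d = e + 2 := ⟨d - 2, by omega⟩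
      rw [hrec (a+1) (e+3) (by omega) (by omega)]
      rw [show e+3-1 = e+2 from rfl, ih, show a+1-1 = a from rfl]
      rw [Finset.sum_Icc_succ_top (by omega : 1 ≤ e+3)]
      have key : (∑ j ∈ Finset.Icc 1 (e+2),
            (((e+2).factorial : ℚ)/(j.factorial : ℚ)) *
              (((a+1+j-2).factorial : ℚ)/(((a+1+(e+2+1)-2)).factorial : ℚ)) * M a j)
          = ((e+2 : ℚ)/((a : ℚ)+e+2)) * ∑ j ∈ Finset.Icc 1 (e+2),
            (((e+2-1).factorial : ℚ)/(j.factorial : ℚ)) *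
              (((a+1+j-2).factorial : ℚ)/(((a+1+(e+2)-2)).factorial : ℚ)) * M a j := by
        rw [Finset.mul_sum]
        refine Finset.sum_congr rfl fun j hj => ?_
        rw [show e+2 = (e+1)+1 from rfl, show e+1+1-1 = e+1 from rfl,
          show a+1+(e+1+1+1)-2 = (a+e+1)+1 from by omega,
          show a+1+(e+1+1)-2 = a+e+1 from by omega,
          Nat.factorial_succ (e+1), Nat.factorial_succ (a+e+1)]
        have := hfac j; have := hfac (e+1); have := hfac (a+e+1)
        have h4 : ((a:ℚ)+e+2) ≠ 0 := by positivity
        push_cast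
        field_simp
        ring
      rw [key]
      rw [show a+1+(e+2+1)-2 = a+e+1+1 from by omega,
        show e+2-1 = e+1 from rfl,
        Nat.factorial_succ (e+2), Nat.factorial_succ (a+e+1), Nat.factorial_succ (e+1)]
      have ha : (0:ℚ) ≤ (a:ℚ) := Nat.cast_nonneg a
      have he : (0:ℚ) ≤ (e:ℚ) := Nat.cast_nonneg e
      have h5 : ((a:ℚ)+e+2) ≠ 0 := by positivity
      have := hfac e; have h8 := hfac (e+1); have h9 := hfac (a+e+1)
      push_cast
      generalize (∑ j ∈ Finset.Icc 1 (e+2),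
            (((e+1).factorial : ℚ)/(j.factorial : ℚ)) *
              (((a+1+j-2).factorial : ℚ)/(((a+1+(e+2)-2)).factorial : ℚ)) * M a j) = S
      generalize M a (e+2+1) = X
      have h6 : ((a:ℚ)+1+((e:ℚ)+3)-1) ≠ 0 := by linarith
      have h7 : ((a:ℚ)+1+((e:ℚ)+2)-1) ≠ 0 := by linarith
      have h10 : ((a:ℚ)+1+((e:ℚ)+2+1)-1) ≠ 0 := by linarith
      have h11 : ((e:ℚ)+3) ≠ 0 := by linarith
      have h12 : ((e:ℚ)+2+1) ≠ 0 := by linarith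
      have h13 : ((e:ℚ)+1+1) ≠ 0 := by linarith
      have h14 : ((a:ℚ)+(e:ℚ)+1+1) ≠ 0 := by linarith
      field_simp
      ring
end

section
/- The second moments satisfy M^{(2)}_d = (2/(d(d+1))) Σ_{j=1}^d (1/j) Σ_{k=1}^j 1/k for all d ≥ 1, where M^{(2)}_d is defined by M^{(2)}_1 = 1 and M^{(2)}_d = ((d-1)/(d+1)) M^{(2)}_{d-1} + (2/(d(d+1))) M^{(1)}_d with M^{(1)}_d = (1/d) Σ_{k=1}^d 1/k. -/
/-- The second moments `M^{(2)}_d`, defined by `M^{(2)}_1 = 1` and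
`M^{(2)}_d = ((d-1)/(d+1)) M^{(2)}_{d-1} + (2/(d(d+1))) M^{(1)}_d` with
`M^{(1)}_d = (1/d) Σ_{k=1}^d 1/k`, equal `(2/(d(d+1))) Σ_{j=1}^d (1/j) Σ_{k=1}^j 1/k`. -/
theorem second_moment_closed_form (M2 : ℕ → ℚ)
    (h1 : M2 1 = 1)
    (hrec : ∀ d, 2 ≤ d → M2 d = ((d - 1 : ℚ) / (d + 1 : ℚ)) * M2 (d - 1) +
      (2 / ((d : ℚ) * (d + 1 : ℚ))) * ((1 / (d : ℚ)) * ∑ k ∈ Finset.Icc 1 d, (1 : ℚ) / k))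
    (d : ℕ) (hd : 1 ≤ d) :
    M2 d = (2 / ((d : ℚ) * (d + 1 : ℚ))) *
      ∑ j ∈ Finset.Icc 1 d, (1 / (j : ℚ)) * ∑ k ∈ Finset.Icc 1 j, (1 : ℚ) / k := by
  induction d, hd using Nat.le_induction with
  | base => norm_num [h1]
  | succ n hn ih =>
    have h2 : 2 ≤ n + 1 := by omega
    have hrw := hrec (n + 1) h2
    simp only [Nat.add_sub_cancel] at hrw
    have hS : (∑ j ∈ Finset.Icc 1 (n + 1), (1 / (j : ℚ)) * ∑ k ∈ Finset.Icc 1 j, (1 : ℚ) / k)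
        = (∑ j ∈ Finset.Icc 1 n, (1 / (j : ℚ)) * ∑ k ∈ Finset.Icc 1 j, (1 : ℚ) / k)
          + (1 / ((n : ℚ) + 1)) * ∑ k ∈ Finset.Icc 1 (n + 1), (1 : ℚ) / k := by
      rw [Finset.sum_Icc_succ_top (by omega : 1 ≤ n + 1)]
      push_cast; ring
    set S := ∑ j ∈ Finset.Icc 1 n, (1 / (j : ℚ)) * ∑ k ∈ Finset.Icc 1 j, (1 : ℚ) / k
    set H := ∑ k ∈ Finset.Icc 1 (n + 1), (1 : ℚ) / k
    rw [hrw, ih, hS]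
    have hn0 : (n : ℚ) ≠ 0 := Nat.cast_ne_zero.mpr (by omega)
    have hn0' : (0 : ℚ) < n := by positivity
    have hn1 : (n : ℚ) + 1 ≠ 0 := by positivity
    have hn2 : (n : ℚ) + 2 ≠ 0 := by positivity
    push_cast
    field_simp
    ring
end

section
/- For fixed d ≥ 1, the sequence m ↦ M^{(m)}_d is nonincreasing in m. -/
/-- For fixed `d ≥ 1`, the sequence `m ↦ M^{(m)}_d` is nonincreasing in `m`. -/
theorem moments_antitone_in_m (M : ℕ → ℕ → ℚ)
    (h0 : ∀ d, 1 ≤ d → M 0 d = 1)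
    (h1 : ∀ m, M m 1 = 1)
    (hrec : ∀ m d, 1 ≤ m → 2 ≤ d →
      M m d = ((d - 1 : ℚ) / (m + d - 1 : ℚ)) * M m (d - 1) +
        ((m : ℚ) / ((d : ℚ) * (m + d - 1 : ℚ))) * M (m - 1) d)
    (d : ℕ) (hd : 1 ≤ d) :
    ∀ m : ℕ, M (m + 1) d ≤ M m d := by
  -- Positivity of all moments
  have hpos : ∀ n m d, m + d ≤ n → 1 ≤ d → 0 < M m d := by
    intro n
    induction n with
    | zero => intro m d h hd'; omega
    | succ n ih =>
      intro m d h hd'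
      rcases eq_or_lt_of_le hd' with hd1 | hd2
      · rw [← hd1, h1]; norm_num
      · rcases Nat.eq_zero_or_pos m with hm | hm
        · subst hm; rw [h0 d hd']; norm_num
        · rw [hrec m d hm hd2]
          have p1 := ih m (d-1) (by omega) (by omega)
          have p2 := ih (m-1) d (by omega) hd'
          have hdQ : (2:ℚ) ≤ (d:ℚ) := by exact_mod_cast hd2
          have hmQ : (1:ℚ) ≤ (m:ℚ) := by exact_mod_cast hm
          have c1 : (0:ℚ) < ((d:ℚ) - 1) / ((m:ℚ) + (d:ℚ) - 1) := by
            apply div_pos <;> linarith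
          have c2 : (0:ℚ) < (m:ℚ) / ((d:ℚ) * ((m:ℚ) + (d:ℚ) - 1)) := by
            apply div_pos
            · linarith
            · apply mul_pos <;> linarith
          have := mul_pos c1 p1
          have := mul_pos c2 p2
          linarith
  -- the combined statement: monotone in m, and d·M(m,d-1) ≤ (m+d)·M(m,d)
  have key : ∀ n m d, m + d ≤ n → 1 ≤ d →
      (M (m+1) d ≤ M m d ∧
        (2 ≤ d → (d:ℚ) * M m (d-1) ≤ ((m:ℚ) + (d:ℚ)) * M m d)) := by
    intro n
    induction n with
    | zero => intro m d h hd'; omega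
    | succ n ih =>
      intro m d h hd'
      have hQ : 2 ≤ d → (d:ℚ) * M m (d-1) ≤ ((m:ℚ) + (d:ℚ)) * M m d := by
        intro hd2
        have hdQ : (2:ℚ) ≤ (d:ℚ) := by exact_mod_cast hd2
        rcases Nat.eq_zero_or_pos m with hm | hm
        · subst hm
          rw [h0 d (by omega), h0 (d-1) (by omega)]
          push_cast
          linarith
        · have hmQ : (1:ℚ) ≤ (m:ℚ) := by exact_mod_cast hm
          have hden : ((m:ℚ) + (d:ℚ) - 1) ≠ 0 := by intro hc; linarith
          have hdne : (d:ℚ) ≠ 0 := by positivity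
          have recm := hrec m d hm hd2
          have recm' : (d:ℚ) * ((m:ℚ) + (d:ℚ) - 1) * M m d =
              (d:ℚ) * ((d:ℚ) - 1) * M m (d-1) + (m:ℚ) * M (m-1) d := by
            rw [recm]; field_simp
          -- IH: Q at (m-1, d)
          have QIH := (ih (m-1) d (by omega) hd').2 hd2
          -- IH: Mono at (m-1, d-1)
          have MoIH := (ih (m-1) (d-1) (by omega) (by omega)).1
          rw [show m - 1 + 1 = m by omega] at MoIH
          have hm1 : ((m-1 : ℕ) : ℚ) = (m:ℚ) - 1 := by
            have := Nat.cast_sub hm (R := ℚ); simpa using this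
          rw [hm1] at QIH
          have pz : 0 < M (m-1) d := hpos (m-1+d) (m-1) d le_rfl hd'
          have py : 0 < M m (d-1) := hpos (m+(d-1)) m (d-1) le_rfl (by omega)
          -- chain: b·y ≤ b·w ≤ (a-1+b)·z  hence  a((a+b)z - by) ≥ a·z ≥ 0
          have step1 : (d:ℚ) * M m (d-1) ≤ (d:ℚ) * M (m-1) (d-1) := by
            apply mul_le_mul_of_nonneg_left MoIH (by linarith)
          have step2 : (d:ℚ) * M m (d-1) ≤ ((m:ℚ) - 1 + (d:ℚ)) * M (m-1) d := by
            linarith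
          -- goal: b y ≤ (a+b) x, using (a+b-1)·b·((a+b)x - b y) = a((a+b)z - b y)
          nlinarith [mul_pos (show (0:ℚ) < (m:ℚ) by linarith)
              (show (0:ℚ) < M (m-1) d from pz),
            mul_le_mul_of_nonneg_left step2 (show (0:ℚ) ≤ (m:ℚ) by linarith),
            mul_pos (show (0:ℚ) < (d:ℚ) by linarith)
              (show (0:ℚ) < (m:ℚ) + (d:ℚ) - 1 by linarith)]
      refine ⟨?_, hQ⟩
      rcases eq_or_lt_of_le hd' with hd1 | hd2
      · rw [← hd1, h1, h1]
      · have hdQ : (2:ℚ) ≤ (d:ℚ) := by exact_mod_cast hd2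
        have hmQ : (0:ℚ) ≤ (m:ℚ) := by positivity
        have hden : ((m:ℚ) + 1 + (d:ℚ) - 1) ≠ 0 := by intro hc; linarith
        have hdne : (d:ℚ) ≠ 0 := by positivity
        have recm := hrec (m+1) d (by omega) hd2
        rw [show (m+1) - 1 = m by omega] at recm
        push_cast at recm
        have recm' : (d:ℚ) * ((m:ℚ) + (d:ℚ)) * M (m+1) d =
            (d:ℚ) * ((d:ℚ) - 1) * M (m+1) (d-1) + ((m:ℚ) + 1) * M m d := by
          rw [recm]; field_simp; ring
        have MoIH := (ih m (d-1) (by omega) (by omega)).1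
        have Qcur := hQ hd2
        have px : 0 < M m d := hpos (m+d) m d le_rfl hd'
        have step1 : (d:ℚ) * M (m+1) (d-1) ≤ (d:ℚ) * M m (d-1) := by
          apply mul_le_mul_of_nonneg_left MoIH (by linarith)
        have step2 : (d:ℚ) * M (m+1) (d-1) ≤ ((m:ℚ) + (d:ℚ) + 1) * M m d := by
          nlinarith
        -- d(m+d) M(m+1,d) = d(d-1)M(m+1,d-1) + (m+1)M(m,d) ≤ d(m+d) M(m,d)
        nlinarith [mul_le_mul_of_nonneg_left step2
            (show (0:ℚ) ≤ (d:ℚ) - 1 by linarith),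
          mul_pos (show (0:ℚ) < (d:ℚ) by linarith)
            (show (0:ℚ) < (m:ℚ) + (d:ℚ) by linarith)]
  intro m
  exact (key (m+d) m d le_rfl hd).1
end

section
/- For fixed m ≥ 1, the sequence d ↦ M^{(m)}_d is nonincreasing in d. -/
/-- For fixed `m ≥ 1`, the sequence `d ↦ M^{(m)}_d` is nonincreasing in `d`. -/
theorem moments_antitone_in_d (M : ℕ → ℕ → ℚ)
    (h0 : ∀ d, 1 ≤ d → M 0 d = 1)
    (h1 : ∀ m, M m 1 = 1)
    (hrec : ∀ m d, 1 ≤ m → 2 ≤ d →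
      M m d = ((d - 1 : ℚ) / (m + d - 1 : ℚ)) * M m (d - 1) +
        ((m : ℚ) / ((d : ℚ) * (m + d - 1 : ℚ))) * M (m - 1) d)
    (m : ℕ) (hm : 1 ≤ m) :
    ∀ d : ℕ, 1 ≤ d → M m (d + 1) ≤ M m d := by
  suffices H : ∀ k : ℕ, (∀ d, 1 ≤ d → 0 < M k d) ∧ (∀ d, 1 ≤ d → M k (d+1) ≤ M k d) by
    intro d hd; exact (H m).2 d hd
  intro k
  induction k with
  | zero =>
    refine ⟨fun d hd => ?_, fun d hd => ?_⟩
    · rw [h0 d hd]; norm_num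
    · rw [h0 d hd, h0 (d+1) (by omega)]
  | succ n ih =>
    obtain ⟨ihpos, ihanti⟩ := ih
    -- recurrence specialized at (n+1, d+1) for d ≥ 1, with casts cleaned up
    have rec' : ∀ d : ℕ, 1 ≤ d →
        M (n+1) (d+1) = ((d : ℚ)/((n:ℚ)+(d:ℚ)+1)) * M (n+1) d +
          (((n:ℚ)+1)/(((d:ℚ)+1)*((n:ℚ)+(d:ℚ)+1))) * M n (d+1) := by
      intro d hd
      have h := hrec (n+1) (d+1) (by omega) (by omega)
      simp only [Nat.add_sub_cancel] at h
      rw [h]; push_cast; ring_nf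
    have pos : ∀ d, 1 ≤ d → 0 < M (n+1) d := by
      intro d hd
      induction d with
      | zero => omega
      | succ e ihe =>
        rcases Nat.eq_or_lt_of_le hd with h | h
        · rw [show e + 1 = 1 by omega, h1]; norm_num
        · have he : 1 ≤ e := by omega
          have hMe := ihe he
          have hMn := ihpos (e+1) (by omega)
          rw [rec' e he]
          have c1 : (0:ℚ) < (e : ℚ)/((n:ℚ)+(e:ℚ)+1) := by positivity
          have c2 : (0:ℚ) < ((n:ℚ)+1)/(((e:ℚ)+1)*((n:ℚ)+(e:ℚ)+1)) := by positivity
          have hc1 : (0:ℚ) < (e:ℚ) := by exact_mod_cast he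
          have c1' : (0:ℚ) < (e : ℚ)/((n:ℚ)+(e:ℚ)+1) := by positivity
          positivity
    refine ⟨pos, ?_⟩
    intro d hd
    induction d, hd using Nat.le_induction with
    | base =>
      -- M (n+1) 2 ≤ M (n+1) 1 = 1
      have h := rec' 1 le_rfl
      rw [h1] at h
      have hA : (0:ℚ) ≤ (n:ℚ) := by positivity
      have hx1 : M n 2 ≤ 1 := by
        have := ihanti 1 le_rfl
        rwa [h1] at this
      have hx0 : 0 < M n 2 := ihpos 2 (by omega)
      rw [h1]
      have hden : (0:ℚ) < (n:ℚ) + 2 := by positivity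
      have h' : (2*((n:ℚ)+2)) * M (n+1) 2 = 2 + ((n:ℚ)+1) * M n 2 := by
        rw [h]; push_cast; field_simp; ring
      nlinarith [mul_le_mul_of_nonneg_left hx1 (by positivity : (0:ℚ) ≤ (n:ℚ)+1)]
    | succ d hd1 ihd =>
      -- variables
      set A : ℚ := (n:ℚ) with hAdef
      set B : ℚ := (d:ℚ) with hBdef
      have hA : (0:ℚ) ≤ A := by positivity
      have hB : (1:ℚ) ≤ B := by rw [hBdef]; exact_mod_cast hd1
      have hba : M (n+1) (d+1) ≤ M (n+1) d := ihd
      have hqp : M n (d+2) ≤ M n (d+1) := by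
        have := ihanti (d+1) (by omega); convert this using 2 <;> omega
      have hb0 : 0 < M (n+1) (d+1) := pos (d+1) (by omega)
      have hp0 : 0 < M n (d+1) := ihpos (d+1) (by omega)
      have e1 := rec' d hd1
      have e2 := rec' (d+1) (by omega)
      push_cast at e2
      -- clear denominators
      have E1 : (B+1)*(A+B+1) * M (n+1) (d+1) = B*(B+1) * M (n+1) d + (A+1) * M n (d+1) := by
        rw [e1]; field_simp; ring
      have E2 : (B+2)*(A+B+2) * M (n+1) (d+2) = (B+1)*(B+2) * M (n+1) (d+1) + (A+1) * M n (d+2) := by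
        rw [show d + 1 + 1 = d + 2 by ring] at e2
        rw [e2]; field_simp; ring
      have hpb : M n (d+1) ≤ (B+1) * M (n+1) (d+1) := by
        nlinarith [mul_le_mul_of_nonneg_left hba (by nlinarith : (0:ℚ) ≤ B*(B+1))]
      have hqb : M n (d+2) ≤ (B+1) * M (n+1) (d+1) := hqp.trans hpb
      have hint1 := mul_le_mul_of_nonneg_left hqb (by linarith : (0:ℚ) ≤ A+1)
      have hAb : (0:ℚ) ≤ (A+1) * M (n+1) (d+1) := by nlinarith
      have hfac : (0:ℚ) < (B+2)*(A+B+2) := by nlinarith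
      have hstep : (B+2)*(A+B+2) * M (n+1) (d+2) ≤ (B+2)*(A+B+2) * M (n+1) (d+1) := by
        linarith [E2, hint1, hAb]
      exact le_of_mul_le_mul_left hstep hfac
end
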